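/- arXiv:1610.05719 — 2 statements merged into one kernel-verified Lean document; each statement's English description precedes it below -/
import Mathlib

section
/- Let μ be a finite Borel measure on 𝒞 × 𝒞. Then for all positive integers k and r, C(C(μ,k),r) ⊆ C(μ,r), where for a set 𝒮 of k×k matrices, C(𝒮,r) := ⋃_{X ∈ 𝒮} C(X,r). In particular, C(C(S,k),r) ⊆ C(S,r) for every nonnegative square matrix S. -/
open MeasureTheory Matrix
open scoped Pointwise

noncomputable section

/-- The Cantor set `{0,1}^ℕ`. -/
abbrev Cantor : Type := ℕ → Bool

/-- Cylinder set of a binary string given as a function `Fin n → Bool`. -/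
def cylF {n : ℕ} (x : Fin n → Bool) : Set Cantor := {ω | ∀ i : Fin n, ω i = x i}

/-- Cylinder set of a binary string given as a list. -/
def cyl (x : List Bool) : Set Cantor := {ω | ∀ i : Fin x.length, ω i = x.get i}

/-- `ν` is the fair coin-flipping (uniform product) measure on the Cantor set:
the unique Borel probability measure giving every cylinder of depth `n` mass `2⁻ⁿ`. -/
def IsCoinMeasure (ν : Measure Cantor) : Prop :=
  IsProbabilityMeasure ν ∧ ∀ (n : ℕ) (x : Fin n → Bool), ν (cylF x) = (1 / 2 : ENNReal) ^ n

/-- `K(k,n)`: nonnegative `k × I` matrices with all row sums `|I|/k` and all column sums `1`. -/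
def Kset (k : ℕ) (I : Type) [Fintype I] : Set (Matrix (Fin k) I ℝ) :=
  {M | (∀ i j, 0 ≤ M i j) ∧ (∀ i, ∑ j, M i j = (Fintype.card I : ℝ) / k) ∧
       (∀ j, ∑ i, M i j = 1)}

/-- The `k`-shape `C(S,k) = {M S Mᵀ : M ∈ K(k,n)}` of a square matrix `S`. -/
def matShape {I : Type} [Fintype I] (S : Matrix I I ℝ) (k : ℕ) :
    Set (Matrix (Fin k) (Fin k) ℝ) :=
  (fun M => M * S * Mᵀ) '' Kset k I

/-- `γ(S)`: the sum of all entries of `S`. -/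
def gamma {I : Type} [Fintype I] (S : Matrix I I ℝ) : ℝ := ∑ i, ∑ j, S i j

/-- The entrywise ℓ¹ norm of a matrix. -/
def l1 {k : ℕ} (A : Matrix (Fin k) (Fin k) ℝ) : ℝ := ∑ i, ∑ j, |A i j|

/-- The Hausdorff distance (w.r.t. the entrywise ℓ¹ norm) between `A` and `B` is at most `ε`. -/
def hdistLE {k : ℕ} (A B : Set (Matrix (Fin k) (Fin k) ℝ)) (ε : ℝ) : Prop :=
  (∀ X ∈ A, ∃ Y ∈ B, l1 (X - Y) ≤ ε) ∧ (∀ Y ∈ B, ∃ X ∈ A, l1 (X - Y) ≤ ε)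

/-- Convergence of a sequence of shapes to `L` in the ℓ¹-Hausdorff metric. -/
def ShapeTendsto {k : ℕ} (C : ℕ → Set (Matrix (Fin k) (Fin k) ℝ))
    (L : Set (Matrix (Fin k) (Fin k) ℝ)) : Prop :=
  ∀ ε : ℝ, 0 < ε → ∃ N : ℕ, ∀ n ≥ N, hdistLE (C n) L ε

/-- `C₀(μ,k)`: matrices `M` with `M i j = ∫ fᵢ(x) fⱼ(y) dμ` for a measurable partition of unity
`f₁,…,f_k` with `∫ fᵢ dν = 1/k`. -/
def mShape0 {α : Type} [MeasurableSpace α] (ν : Measure α) (μ : Measure (α × α)) (k : ℕ) :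
    Set (Matrix (Fin k) (Fin k) ℝ) :=
  {M | ∃ f : Fin k → α → ℝ,
    (∀ i, Measurable (f i)) ∧ (∀ i x, 0 ≤ f i x) ∧ (∀ x, ∑ i, f i x = 1) ∧
    (∀ i, ∫ x, f i x ∂ν = 1 / k) ∧
    (∀ i j, M i j = ∫ p, f i p.1 * f j p.2 ∂μ)}

/-- `C(μ,k)`: the topological closure of `C₀(μ,k)`. -/
def mShape {α : Type} [MeasurableSpace α] (ν : Measure α) (μ : Measure (α × α)) (k : ℕ) :
    Set (Matrix (Fin k) (Fin k) ℝ) := closure (mShape0 ν μ k)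

/-- `C_c(μ,k)`: as `C₀(μ,k)` but with continuous witness functions. -/
def mShapeC (ν : Measure Cantor) (μ : Measure (Cantor × Cantor)) (k : ℕ) :
    Set (Matrix (Fin k) (Fin k) ℝ) :=
  {M | ∃ f : Fin k → Cantor → ℝ,
    (∀ i, Continuous (f i)) ∧ (∀ i x, 0 ≤ f i x) ∧ (∀ x, ∑ i, f i x = 1) ∧
    (∀ i, ∫ x, f i x ∂ν = 1 / k) ∧
    (∀ i j, M i j = ∫ p, f i p.1 * f j p.2 ∂μ)}

open Classical in
/-- The real adjacency matrix of a simple graph. -/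
def adjMat {V : Type} [Fintype V] (G : SimpleGraph V) : Matrix V V ℝ :=
  fun a b => if G.Adj a b then 1 else 0

/-- `C₀(G,k) = ‖A_G‖₁⁻¹ ⬝ C(A_G,k)` for a finite graph `G`. -/
def graphShape {V : Type} [Fintype V] (G : SimpleGraph V) (k : ℕ) :
    Set (Matrix (Fin k) (Fin k) ℝ) :=
  (gamma (adjMat G))⁻¹ • matShape (adjMat G) k

/-- `K̂(k,m)`: characteristic matrices of balanced partitions of `{1,…,m}` into `k` classes. -/
def Khat (k m : ℕ) : Set (Matrix (Fin k) (Fin m) ℝ) :=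
  {M | (∀ i j, M i j = 0 ∨ M i j = 1) ∧ (∀ j, ∑ i, M i j = 1) ∧
       (∀ i, ∑ j, M i j = (⌈(m : ℝ) / k⌉₊ : ℝ) ∨ ∑ j, M i j = (⌊(m : ℝ) / k⌋₊ : ℝ))}

/-- `C̃₀(μ,α)`: matrices coming from a measurable partition of unity with `∫ fᵢ dν = αᵢ`. -/
def tShape0 {α : Type} [MeasurableSpace α] (ν : Measure α) (μ : Measure (α × α)) {m : ℕ}
    (a : Fin m → ℝ) : Set (Matrix (Fin m) (Fin m) ℝ) :=
  {M | ∃ f : Fin m → α → ℝ,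
    (∀ i, Measurable (f i)) ∧ (∀ i x, 0 ≤ f i x) ∧ (∀ x, ∑ i, f i x = 1) ∧
    (∀ i, ∫ x, f i x ∂ν = a i) ∧
    (∀ i j, M i j = ∫ p, f i p.1 * f j p.2 ∂μ)}

/-- `C̃(μ,α)`: the topological closure of `C̃₀(μ,α)`. -/
def tShape {α : Type} [MeasurableSpace α] (ν : Measure α) (μ : Measure (α × α)) {m : ℕ}
    (a : Fin m → ℝ) : Set (Matrix (Fin m) (Fin m) ℝ) := closure (tShape0 ν μ a)

/-- The Hausdorff distance w.r.t. the entrywise ℓ∞ norm between `A` and `B` is at most `ε`. -/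
def hdistInfLE {m : ℕ} (A B : Set (Matrix (Fin m) (Fin m) ℝ)) (ε : ℝ) : Prop :=
  (∀ X ∈ A, ∃ Y ∈ B, ∀ i j, |X i j - Y i j| ≤ ε) ∧
  (∀ Y ∈ B, ∃ X ∈ A, ∀ i j, |X i j - Y i j| ≤ ε)

/-!
Both inclusions come from composing fractional partitions. If `N ∈ K(r,k)` and `M ∈ K(k,I)`,
then `N M ∈ K(r,I)` and `N (M S Mᵀ) Nᵀ = (N M) S (N M)ᵀ`. Likewise, if `f₁,…,f_k` witnesses
`X ∈ C₀(μ,k)`, then `gᵢ = ∑ₗ N i l • fₗ` is a partition of unity with `∫ gᵢ dν = 1/r`, and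
bilinearity of `(f, g) ↦ ∫ f(x) g(y) dμ` shows that it witnesses `N X Nᵀ ∈ C₀(μ,r)`.
Since `X ↦ N X Nᵀ` is continuous, this passes to the closure `C(μ,k)`.
-/

namespace Kset

variable {k r : ℕ} {I : Type} [Fintype I]

/-- Double counting the entries. Since `x / 0 = 0`, this also covers `k = 0`, where `I` is empty. -/
lemma card_eq_mul {M : Matrix (Fin k) I ℝ} (hM : M ∈ Kset k I) :
    (Fintype.card I : ℝ) = k * (Fintype.card I / k) := by
  obtain ⟨-, hrow, hcol⟩ := hM
  calc (Fintype.card I : ℝ) = ∑ j, ∑ i, M i j := by simp [hcol]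
    _ = ∑ i, ∑ j, M i j := Finset.sum_comm
    _ = k * (Fintype.card I / k) := by simp [hrow]

lemma mul_mem {N : Matrix (Fin r) (Fin k) ℝ} {M : Matrix (Fin k) I ℝ}
    (hN : N ∈ Kset r (Fin k)) (hM : M ∈ Kset k I) : N * M ∈ Kset r I := by
  have hcard := card_eq_mul hM
  obtain ⟨hN0, hNrow, hNcol⟩ := hN
  obtain ⟨hM0, hMrow, hMcol⟩ := hM
  rw [Fintype.card_fin] at hNrow
  refine ⟨fun i j => by
    rw [mul_apply]; exact Finset.sum_nonneg fun l _ => mul_nonneg (hN0 i l) (hM0 l j),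
    fun i => ?_, fun j => ?_⟩
  · calc ∑ j, (N * M) i j = ∑ l, N i l * ∑ j, M l j := by
          simp only [mul_apply, Finset.mul_sum]
          exact Finset.sum_comm
      _ = k / r * (Fintype.card I / k) := by simp only [hMrow, ← Finset.sum_mul, hNrow]
      _ = Fintype.card I / r := by linear_combination -hcard / r
  · calc ∑ i, (N * M) i j = ∑ l, (∑ i, N i l) * M l j := by
          simp only [mul_apply, Finset.sum_mul]
          exact Finset.sum_comm
      _ = 1 := by simp [hNcol, hMcol]

end Kset

lemma biUnion_matShape_subset {I : Type} [Fintype I] (S : Matrix I I ℝ) (k r : ℕ) :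
    ⋃ X ∈ matShape S k, matShape X r ⊆ matShape S r := by
  refine Set.iUnion₂_subset ?_
  rintro _ ⟨M, hM, rfl⟩ _ ⟨N, hN, rfl⟩
  exact ⟨N * M, Kset.mul_mem hN hM, by simp [Matrix.transpose_mul, Matrix.mul_assoc]⟩

section PartitionOfUnity

variable {α ι : Type} [Fintype ι] {f : ι → α → ℝ}

lemma le_one_of_sum_eq_one (hf0 : ∀ i x, 0 ≤ f i x) (hfs : ∀ x, ∑ i, f i x = 1)
    (i : ι) (x : α) : f i x ≤ 1 :=
  hfs x ▸ Finset.single_le_sum (fun j _ => hf0 j x) (Finset.mem_univ i)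

variable [MeasurableSpace α]

lemma integrable_of_sum_eq_one {ν : Measure α} [IsFiniteMeasure ν]
    (hfm : ∀ i, Measurable (f i)) (hf0 : ∀ i x, 0 ≤ f i x) (hfs : ∀ x, ∑ i, f i x = 1)
    (i : ι) : Integrable (f i) ν :=
  Integrable.of_bound (hfm i).aestronglyMeasurable 1 <| ae_of_all _ fun x => by
    rw [Real.norm_of_nonneg (hf0 i x)]
    exact le_one_of_sum_eq_one hf0 hfs i x

lemma integrable_mul_of_sum_eq_one {μ : Measure (α × α)} [IsFiniteMeasure μ]
    (hfm : ∀ i, Measurable (f i)) (hf0 : ∀ i x, 0 ≤ f i x) (hfs : ∀ x, ∑ i, f i x = 1)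
    (i j : ι) : Integrable (fun p : α × α => f i p.1 * f j p.2) μ :=
  Integrable.of_bound
    (((hfm i).comp measurable_fst).mul ((hfm j).comp measurable_snd)).aestronglyMeasurable 1 <|
    ae_of_all _ fun p => by
      rw [Real.norm_of_nonneg (mul_nonneg (hf0 i p.1) (hf0 j p.2))]
      exact mul_le_one₀ (le_one_of_sum_eq_one hf0 hfs i p.1) (hf0 j p.2)
        (le_one_of_sum_eq_one hf0 hfs j p.2)

lemma integral_sum_mul_sum {μ : Measure (α × α)}
    (hf : ∀ l m, Integrable (fun p : α × α => f l p.1 * f m p.2) μ) (a b : ι → ℝ) :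
    ∫ p, (∑ l, a l * f l p.1) * (∑ m, b m * f m p.2) ∂μ
      = ∑ l, ∑ m, a l * b m * ∫ p, f l p.1 * f m p.2 ∂μ := by
  have hexpand : (fun p : α × α => (∑ l, a l * f l p.1) * (∑ m, b m * f m p.2))
      = fun p => ∑ l, ∑ m, a l * b m * (f l p.1 * f m p.2) := by
    ext p
    rw [Finset.sum_mul_sum]
    exact Finset.sum_congr rfl fun l _ => Finset.sum_congr rfl fun m _ => mul_mul_mul_comm ..
  rw [hexpand, integral_finsetSum _ fun l _ => integrable_finsetSum _ fun m _ => (hf l m).const_mul _]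
  refine Finset.sum_congr rfl fun l _ => ?_
  rw [integral_finsetSum _ fun m _ => (hf l m).const_mul _]
  simp only [integral_const_mul]

end PartitionOfUnity

section Shape

variable {α : Type} [MeasurableSpace α] {ν : Measure α} {μ : Measure (α × α)}
  [IsFiniteMeasure ν] [IsFiniteMeasure μ] {k r : ℕ} {N : Matrix (Fin r) (Fin k) ℝ}

lemma mul_mul_transpose_mem_mShape0 [Nonempty α] (hN : N ∈ Kset r (Fin k))
    {X : Matrix (Fin k) (Fin k) ℝ} (hX : X ∈ mShape0 ν μ k) : N * X * Nᵀ ∈ mShape0 ν μ r := by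
  obtain ⟨hN0, hNrow, hNcol⟩ := hN
  rw [Fintype.card_fin] at hNrow
  obtain ⟨f, hfm, hf0, hfs, hfν, hfμ⟩ := hX
  have hk : (k : ℝ) ≠ 0 := by
    rintro hk
    obtain rfl : k = 0 := by exact_mod_cast hk
    simpa using hfs (Classical.arbitrary α)
  refine ⟨fun i x => ∑ l, N i l * f l x,
    fun i => Finset.measurable_sum _ fun l _ => (hfm l).const_mul _,
    fun i x => Finset.sum_nonneg fun l _ => mul_nonneg (hN0 i l) (hf0 l x),
    fun x => ?_, fun i => ?_, fun i j => ?_⟩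
  · rw [Finset.sum_comm]
    simp [← Finset.sum_mul, hNcol, hfs x]
  · rw [integral_finsetSum _ fun l _ => (integrable_of_sum_eq_one hfm hf0 hfs l).const_mul _]
    simp only [integral_const_mul, hfν, ← Finset.sum_mul, hNrow]
    field_simp
  · rw [integral_sum_mul_sum (integrable_mul_of_sum_eq_one hfm hf0 hfs)]
    simp only [← hfμ, mul_apply, transpose_apply, Finset.sum_mul]
    rw [Finset.sum_comm]
    exact Finset.sum_congr rfl fun l _ => Finset.sum_congr rfl fun m _ => by ring

lemma mul_mul_transpose_mem_mShape [Nonempty α] (hN : N ∈ Kset r (Fin k))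
    {X : Matrix (Fin k) (Fin k) ℝ} (hX : X ∈ mShape ν μ k) : N * X * Nᵀ ∈ mShape ν μ r :=
  map_mem_closure (f := fun Z => N * Z * Nᵀ) ((continuous_const.matrix_mul continuous_id).matrix_mul continuous_const) hX
    fun _ hY => mul_mul_transpose_mem_mShape0 hN hY

lemma biUnion_mShape_subset [Nonempty α] (k r : ℕ) :
    ⋃ X ∈ mShape ν μ k, matShape X r ⊆ mShape ν μ r := by
  refine Set.iUnion₂_subset fun X hX => ?_
  rintro _ ⟨N, hN, rfl⟩
  exact mul_mul_transpose_mem_mShape hN hX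

end Shape

theorem stmt_10_general (ν : Measure Cantor) (hν : IsCoinMeasure ν)
    (μ : Measure (Cantor × Cantor)) (hfin : IsFiniteMeasure μ)
    (k r : ℕ) :
    (⋃ X ∈ mShape ν μ k, matShape X r) ⊆ mShape ν μ r ∧
      ∀ (n : ℕ) (S : Matrix (Fin n) (Fin n) ℝ), (∀ i j, 0 ≤ S i j) →
        (⋃ X ∈ matShape S k, matShape X r) ⊆ matShape S r := by
  have := hν.1
  exact ⟨biUnion_mShape_subset k r, fun n S _ => biUnion_matShape_subset S k r⟩

/-- `C(C(μ,k),r) ⊆ C(μ,r)` for a finite Borel measure `μ` on `𝒞 × 𝒞`;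
in particular `C(C(S,k),r) ⊆ C(S,r)` for every nonnegative square matrix `S`. -/
theorem stmt_10 (ν : Measure Cantor) (hν : IsCoinMeasure ν)
    (μ : Measure (Cantor × Cantor)) (hfin : IsFiniteMeasure μ)
    (k r : ℕ) (hk : 0 < k) (hr : 0 < r) :
    (⋃ X ∈ mShape ν μ k, matShape X r) ⊆ mShape ν μ r ∧
      ∀ (n : ℕ) (S : Matrix (Fin n) (Fin n) ℝ), (∀ i j, 0 ≤ S i j) →
        (⋃ X ∈ matShape S k, matShape X r) ⊆ matShape S r :=
  stmt_10_general ν hν μ hfin k r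
end
end

section
/- Let X and Y be nonnegative square real matrices with γ(X) ≤ c and γ(Y) ≤ c, and suppose that for positive integers n and k the Hausdorff distance between C(X,n) and C(Y,n) is at most ε. Then the Hausdorff distance between C(X,k) and C(Y,k) is at most ε + 4ck/n. -/
open MeasureTheory Matrix
open scoped Pointwise

noncomputable section

/-!
Cut `[0, n]` into `k` intervals of length `n / k` and let `R ∈ K(k,n)` record how much of the
`i`-th interval lies in the unit cell `[m, m + 1]`; then `Q = (k / n) Rᵀ ∈ K(n,k)`.
For `P = M X Mᵀ ∈ C(X,k)` the matrix `(Q M) X (Q M)ᵀ` lies in `C(X,n)`, hence is `ε`-close to some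
`N' Y N'ᵀ`, and conjugating by `R`, which does not increase the entrywise ℓ¹ norm because its
columns are probability vectors, gives `(R N') Y (R N')ᵀ ∈ C(Y,k)` that is `ε`-close to
`S P Sᵀ` with `S = R Q`. An interval meets at most two cells only partially, so each column of `S`
is `k / n`-close in ℓ¹ to the corresponding unit vector, and
`P - S P Sᵀ = (1 - S) P + S P (1 - S)ᵀ` shows `‖P - S P Sᵀ‖₁ ≤ 2 (k / n) γ(P) ≤ 2 c k / n`.
-/

section EntrywiseL1

variable {ι κ μ : Type} [Fintype ι] [Fintype κ] [Fintype μ]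

def entrywiseL1 (A : Matrix ι κ ℝ) : ℝ := ∑ i, ∑ j, |A i j|

lemma entrywiseL1_nonneg (A : Matrix ι κ ℝ) : 0 ≤ entrywiseL1 A :=
  Finset.sum_nonneg fun _ _ => Finset.sum_nonneg fun _ _ => abs_nonneg _

lemma l1_eq_entrywiseL1 {k : ℕ} (A : Matrix (Fin k) (Fin k) ℝ) : l1 A = entrywiseL1 A := rfl

lemma gamma_eq_entrywiseL1 {X : Matrix ι ι ℝ} (hX : ∀ i j, 0 ≤ X i j) :
    gamma X = entrywiseL1 X := by
  simp only [gamma, entrywiseL1, abs_of_nonneg (hX _ _)]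

lemma entrywiseL1_add_le (A B : Matrix ι κ ℝ) :
    entrywiseL1 (A + B) ≤ entrywiseL1 A + entrywiseL1 B := by
  simp only [entrywiseL1, ← Finset.sum_add_distrib]
  gcongr with i _ j _
  exact abs_add_le _ _

lemma entrywiseL1_transpose (A : Matrix ι κ ℝ) : entrywiseL1 Aᵀ = entrywiseL1 A :=
  Finset.sum_comm

lemma entrywiseL1_mul_le (A : Matrix ι κ ℝ) (B : Matrix κ μ ℝ) :
    entrywiseL1 (A * B) ≤ ∑ l, (∑ i, |A i l|) * ∑ j, |B l j| :=
  calc entrywiseL1 (A * B) ≤ ∑ i, ∑ j, ∑ l, |A i l| * |B l j| := by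
        unfold entrywiseL1
        gcongr with i _ j _
        simpa only [mul_apply, abs_mul] using Finset.abs_sum_le_sum_abs (fun l => A i l * B l j) _
    _ = ∑ i, ∑ l, ∑ j, |A i l| * |B l j| := Finset.sum_congr rfl fun i _ => Finset.sum_comm
    _ = ∑ l, (∑ i, |A i l|) * ∑ j, |B l j| := by
        rw [Finset.sum_comm]
        simp only [Finset.sum_mul_sum]

variable {β : ℝ}

lemma entrywiseL1_mul_le_of_sum_abs_col_le {A : Matrix ι κ ℝ} (hA : ∀ l, ∑ i, |A i l| ≤ β)
    (B : Matrix κ μ ℝ) : entrywiseL1 (A * B) ≤ β * entrywiseL1 B := by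
  refine (entrywiseL1_mul_le A B).trans ?_
  rw [entrywiseL1, Finset.mul_sum]
  gcongr with l _
  exact hA l

lemma entrywiseL1_mul_transpose_le_of_sum_abs_col_le {A : Matrix μ κ ℝ}
    (hA : ∀ l, ∑ i, |A i l| ≤ β) (B : Matrix ι κ ℝ) :
    entrywiseL1 (B * Aᵀ) ≤ β * entrywiseL1 B := by
  rw [← entrywiseL1_transpose, transpose_mul, transpose_transpose, ← entrywiseL1_transpose B]
  exact entrywiseL1_mul_le_of_sum_abs_col_le hA Bᵀ

lemma entrywiseL1_conj_le {A : Matrix ι κ ℝ} (hA : ∀ l, ∑ i, |A i l| ≤ 1)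
    (D : Matrix κ κ ℝ) : entrywiseL1 (A * D * Aᵀ) ≤ entrywiseL1 D :=
  calc entrywiseL1 (A * D * Aᵀ) ≤ 1 * entrywiseL1 (A * D) :=
        entrywiseL1_mul_transpose_le_of_sum_abs_col_le hA _
    _ ≤ 1 * (1 * entrywiseL1 D) := by
        gcongr
        exact entrywiseL1_mul_le_of_sum_abs_col_le hA D
    _ = entrywiseL1 D := by ring

lemma entrywiseL1_sub_conj_le [DecidableEq ι] {S : Matrix ι ι ℝ}
    (hS : ∀ l, ∑ i, |S i l| ≤ 1) (hE : ∀ l, ∑ i, |(1 - S) i l| ≤ β) (P : Matrix ι ι ℝ) :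
    entrywiseL1 (P - S * P * Sᵀ) ≤ 2 * β * entrywiseL1 P := by
  have hsplit : P - S * P * Sᵀ = (1 - S) * P + S * (P * (1 - S)ᵀ) := by
    simp only [transpose_sub, transpose_one, Matrix.mul_sub, Matrix.sub_mul, Matrix.mul_one,
      Matrix.one_mul, Matrix.mul_assoc]
    abel
  calc entrywiseL1 (P - S * P * Sᵀ)
      ≤ entrywiseL1 ((1 - S) * P) + entrywiseL1 (S * (P * (1 - S)ᵀ)) :=
        hsplit ▸ entrywiseL1_add_le _ _
    _ ≤ β * entrywiseL1 P + 1 * (β * entrywiseL1 P) := by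
        gcongr
        · exact entrywiseL1_mul_le_of_sum_abs_col_le hE P
        · refine (entrywiseL1_mul_le_of_sum_abs_col_le hS _).trans ?_
          gcongr
          exact entrywiseL1_mul_transpose_le_of_sum_abs_col_le hE P
    _ = 2 * β * entrywiseL1 P := by ring

end EntrywiseL1

section Kset

variable {k n : ℕ} {I : Type} [Fintype I]

lemma sum_abs_col_of_mem_Kset {M : Matrix (Fin k) I ℝ} (hM : M ∈ Kset k I) (j : I) :
    ∑ i, |M i j| = 1 := by
  simp only [abs_of_nonneg (hM.1 _ j)]
  exact hM.2.2 j

lemma mul_mem_Kset (hn : 0 < n) {R : Matrix (Fin k) (Fin n) ℝ} (hR : R ∈ Kset k (Fin n))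
    {N : Matrix (Fin n) I ℝ} (hN : N ∈ Kset n I) : R * N ∈ Kset k I := by
  obtain ⟨hR0, hRrow, hRcol⟩ := hR
  obtain ⟨hN0, hNrow, hNcol⟩ := hN
  refine ⟨fun i j => ?_, fun i => ?_, fun j => ?_⟩
  · rw [mul_apply]
    exact Finset.sum_nonneg fun m _ => mul_nonneg (hR0 i m) (hN0 m j)
  · calc ∑ j, (R * N) i j = ∑ m, R i m * ∑ j, N m j := by
          simp only [mul_apply, Finset.mul_sum]
          exact Finset.sum_comm
      _ = (Fintype.card I : ℝ) / k := by
          simp only [hNrow, ← Finset.sum_mul, hRrow, Fintype.card_fin]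
          field_simp
  · calc ∑ i, (R * N) i j = ∑ m, (∑ i, R i m) * N m j := by
          simp only [mul_apply, Finset.sum_mul]
          exact Finset.sum_comm
      _ = 1 := by simp only [hRcol, one_mul, hNcol]

end Kset

section Overlap

/-- The length of `[A, B] ∩ [s, t]` is the increment of the clamp `x ↦ max A (min B x)`
over `[s, t]`. -/
lemma max_zero_min_sub_max_eq {A B s t : ℝ} (hAB : A ≤ B) (hst : s ≤ t) :
    max 0 (min B t - max A s) = max A (min B t) - max A (min B s) := by
  simp only [min_def, max_def]
  split_ifs <;> linarith

/-- The length of `[i L, (i + 1) L] ∩ [m, m + 1]`. -/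
def overlap (L : ℝ) (i m : ℕ) : ℝ :=
  max 0 (min (((i : ℝ) + 1) * L) ((m : ℝ) + 1) - max ((i : ℝ) * L) (m : ℝ))

variable {L : ℝ}

lemma overlap_nonneg (L : ℝ) (i m : ℕ) : 0 ≤ overlap L i m := le_max_left _ _

lemma sum_range_overlap_left (hL : 0 ≤ L) {i n : ℕ} (hi : ((i : ℝ) + 1) * L ≤ n) :
    ∑ m ∈ Finset.range n, overlap L i m = L := by
  set g : ℕ → ℝ := fun x => max ((i : ℝ) * L) (min (((i : ℝ) + 1) * L) x)
  have hiL : (i : ℝ) * L ≤ ((i : ℝ) + 1) * L := by nlinarith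
  have hinc : ∀ m, overlap L i m = g (m + 1) - g m := fun m => by
    simp only [overlap, g, Nat.cast_succ]
    exact max_zero_min_sub_max_eq hiL (by linarith)
  have hi0 : 0 ≤ (i : ℝ) * L := by positivity
  rw [Finset.sum_congr rfl fun m _ => hinc m, Finset.sum_range_sub]
  simp only [g, Nat.cast_zero, min_eq_left hi, min_eq_right (hi0.trans hiL), max_eq_right hiL,
    max_eq_left hi0]
  ring

lemma sum_range_overlap_right (hL : 0 ≤ L) {k m : ℕ} (hm : (m : ℝ) + 1 ≤ k * L) :
    ∑ i ∈ Finset.range k, overlap L i m = 1 := by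
  set g : ℕ → ℝ := fun x => max (m : ℝ) (min ((m : ℝ) + 1) (x * L))
  have hinc : ∀ i, overlap L i m = g (i + 1) - g i := fun i => by
    simp only [overlap, g, Nat.cast_succ]
    rw [min_comm, max_comm ((i : ℝ) * L)]
    exact max_zero_min_sub_max_eq (by linarith) (by nlinarith)
  have hm0 : (0 : ℝ) ≤ m := Nat.cast_nonneg m
  rw [Finset.sum_congr rfl fun i _ => hinc i, Finset.sum_range_sub]
  simp only [g, Nat.cast_zero, zero_mul, min_eq_left hm,
    min_eq_right (by linarith : (0 : ℝ) ≤ m + 1), max_eq_right (by linarith : (m : ℝ) ≤ m + 1),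
    max_eq_left hm0]
  ring

/-- Only the two cells containing the endpoints `i L` and `(i + 1) L` are met partially. -/
lemma overlap_mul_one_sub_eq_zero (hL : 0 ≤ L) {i m : ℕ} (hA : m ≠ ⌊(i : ℝ) * L⌋₊)
    (hB : m ≠ ⌊((i : ℝ) + 1) * L⌋₊) : overlap L i m * (1 - overlap L i m) = 0 := by
  have hA0 : 0 ≤ (i : ℝ) * L := by positivity
  have hB0 : 0 ≤ ((i : ℝ) + 1) * L := by positivity
  suffices overlap L i m = 0 ∨ overlap L i m = 1 by
    rcases this with h | h <;> simp [h]
  rcases hA.lt_or_gt with hlt | hgt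
  · have : (m : ℝ) + 1 ≤ (i : ℝ) * L := by exact_mod_cast (Nat.le_floor_iff hA0).mp hlt
    refine Or.inl (max_eq_left ?_)
    linarith [min_le_right (((i : ℝ) + 1) * L) ((m : ℝ) + 1), le_max_left ((i : ℝ) * L) (m : ℝ)]
  have hAm : (i : ℝ) * L < m := (Nat.floor_lt hA0).mp hgt
  rcases hB.lt_or_gt with hlt' | hgt'
  · have hmB : (m : ℝ) + 1 ≤ ((i : ℝ) + 1) * L := by
      exact_mod_cast (Nat.le_floor_iff hB0).mp hlt'
    right
    rw [overlap, min_eq_right hmB, max_eq_right hAm.le]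
    norm_num
  · have : ((i : ℝ) + 1) * L < m := (Nat.floor_lt hB0).mp hgt'
    refine Or.inl (max_eq_left ?_)
    linarith [min_le_left (((i : ℝ) + 1) * L) ((m : ℝ) + 1), le_max_right ((i : ℝ) * L) (m : ℝ)]

lemma sum_range_overlap_mul_one_sub_le (hL : 0 ≤ L) (i n : ℕ) :
    ∑ m ∈ Finset.range n, overlap L i m * (1 - overlap L i m) ≤ 1 / 2 := by
  set a := ⌊(i : ℝ) * L⌋₊
  set b := ⌊((i : ℝ) + 1) * L⌋₊
  have hbound : ∀ m, overlap L i m * (1 - overlap L i m)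
      ≤ (if m = a then 1 / 4 else 0) + (if m = b then 1 / 4 else 0) := fun m => by
    have hquarter : overlap L i m * (1 - overlap L i m) ≤ 1 / 4 := by
      nlinarith [sq_nonneg (overlap L i m - 1 / 2)]
    by_cases hm : m = a ∨ m = b
    · have hite : (0 : ℝ) ≤ (if m = a then 1 / 4 else 0) ∧
          (0 : ℝ) ≤ (if m = b then 1 / 4 else 0) := ⟨by positivity, by positivity⟩
      rcases hm with hm | hm
      · rw [if_pos hm]; linarith [hite.2]
      · rw [if_pos hm]; linarith [hite.1]
    · obtain ⟨hma, hmb⟩ := not_or.mp hm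
      rw [overlap_mul_one_sub_eq_zero hL hma hmb]
      positivity
  calc ∑ m ∈ Finset.range n, overlap L i m * (1 - overlap L i m)
      ≤ ∑ m ∈ Finset.range n, ((if m = a then 1 / 4 else 0) + (if m = b then 1 / 4 else 0)) :=
        Finset.sum_le_sum fun m _ => hbound m
    _ ≤ 1 / 4 + 1 / 4 := by
        rw [Finset.sum_add_distrib, Finset.sum_ite_eq', Finset.sum_ite_eq']
        gcongr <;> split_ifs <;> norm_num
    _ = 1 / 2 := by norm_num

end Overlap

lemma sum_abs_one_sub_apply_eq {ι : Type} [Fintype ι] [DecidableEq ι] {S : Matrix ι ι ℝ} {l : ι}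
    (hS0 : ∀ i, 0 ≤ S i l) (hS1 : ∑ i, S i l = 1) :
    ∑ i, |(1 - S) i l| = 2 * (1 - S l l) := by
  have hrest : ∑ i ∈ Finset.univ.erase l, S i l = 1 - S l l := by
    rw [← hS1, ← Finset.add_sum_erase _ _ (Finset.mem_univ l)]
    ring
  have hll : S l l ≤ 1 := by
    linarith [Finset.sum_nonneg fun i (_ : i ∈ Finset.univ.erase l) => hS0 i]
  rw [← Finset.add_sum_erase _ _ (Finset.mem_univ l), Matrix.sub_apply, one_apply_eq,
    abs_of_nonneg (by linarith), ← hrest]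
  have hoff : ∀ i ∈ Finset.univ.erase l, |(1 - S) i l| = S i l := fun i hi => by
    rw [Matrix.sub_apply, one_apply_ne (Finset.ne_of_mem_erase hi), zero_sub, abs_neg,
      abs_of_nonneg (hS0 i)]
  rw [Finset.sum_congr rfl hoff]
  ring

section OverlapMatrix

variable {k n : ℕ}

/-- `[0, n]` is cut into `k` intervals of length `n / k`; entry `(i, m)` is the length of the
part of the `i`-th interval lying in `[m, m + 1]`. -/
def overlapMat (k n : ℕ) : Matrix (Fin k) (Fin n) ℝ := fun i m => overlap ((n : ℝ) / k) i m

lemma overlapMat_mem_Kset (hk : 0 < k) : overlapMat k n ∈ Kset k (Fin n) := by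
  have hL : (0 : ℝ) ≤ (n : ℝ) / k := by positivity
  refine ⟨fun i m => overlap_nonneg _ _ _, fun i => ?_, fun m => ?_⟩
  · have hi : ((i : ℕ) : ℝ) + 1 ≤ k := by exact_mod_cast i.isLt
    have hiL : ((i : ℕ) + 1 : ℝ) * ((n : ℝ) / k) ≤ n :=
      (mul_le_mul_of_nonneg_right hi hL).trans_eq (mul_div_cancel₀ _ (by positivity))
    rw [Fintype.card_fin, ← sum_range_overlap_left hL hiL]
    exact Fin.sum_univ_eq_sum_range (fun m => overlap ((n : ℝ) / k) i m) n
  · have hm : ((m : ℕ) : ℝ) + 1 ≤ k * ((n : ℝ) / k) := by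
      rw [mul_div_cancel₀ _ (by positivity)]
      exact_mod_cast m.isLt
    rw [← sum_range_overlap_right hL hm]
    exact Fin.sum_univ_eq_sum_range (fun i => overlap ((n : ℝ) / k) i m) k

def splitMat (k n : ℕ) : Matrix (Fin n) (Fin k) ℝ := ((k : ℝ) / n) • (overlapMat k n)ᵀ

lemma splitMat_mem_Kset (hk : 0 < k) (hn : 0 < n) : splitMat k n ∈ Kset n (Fin k) := by
  obtain ⟨hR0, hRrow, hRcol⟩ := overlapMat_mem_Kset (n := n) hk
  refine ⟨fun m i => mul_nonneg (by positivity) (hR0 i m), fun m => ?_, fun i => ?_⟩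
  · simp only [splitMat, Matrix.smul_apply, transpose_apply, smul_eq_mul, ← Finset.mul_sum, hRcol,
      Fintype.card_fin, mul_one]
  · simp only [splitMat, Matrix.smul_apply, transpose_apply, smul_eq_mul, ← Finset.mul_sum, hRrow i,
      Fintype.card_fin]
    field_simp

lemma overlapMat_mul_splitMat_apply_self_ge (hk : 0 < k) (hn : 0 < n) (l : Fin k) :
    1 - (k : ℝ) / (2 * n) ≤ (overlapMat k n * splitMat k n) l l := by
  have hrow : ∑ m, overlapMat k n l m = (n : ℝ) / k := by
    simpa using (overlapMat_mem_Kset (n := n) hk).2.1 l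
  have hquad : ∑ m, overlapMat k n l m * (1 - overlapMat k n l m) ≤ 1 / 2 :=
    (Fin.sum_univ_eq_sum_range (fun m => overlap ((n : ℝ) / k) l m *
      (1 - overlap ((n : ℝ) / k) l m)) n).trans_le
      (sum_range_overlap_mul_one_sub_le (by positivity) l n)
  simp only [mul_sub, mul_one, Finset.sum_sub_distrib, hrow] at hquad
  have hdiag : (overlapMat k n * splitMat k n) l l
      = (k : ℝ) / n * ∑ m, overlapMat k n l m * overlapMat k n l m := by
    simp only [splitMat, mul_apply, Matrix.smul_apply, transpose_apply, smul_eq_mul, Finset.mul_sum]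
    exact Finset.sum_congr rfl fun m _ => by ring
  have hscale : 1 - (k : ℝ) / (2 * n) = (k : ℝ) / n * ((n : ℝ) / k - 1 / 2) := by
    field_simp
  rw [hdiag, hscale]
  gcongr
  linarith

lemma sum_abs_one_sub_overlapMat_mul_splitMat_le (hk : 0 < k) (hn : 0 < n) (l : Fin k) :
    ∑ i, |(1 - overlapMat k n * splitMat k n : Matrix (Fin k) (Fin k) ℝ) i l| ≤ k / n := by
  have hS := mul_mem_Kset hn (overlapMat_mem_Kset (n := n) hk)
    (splitMat_mem_Kset hk hn)
  rw [sum_abs_one_sub_apply_eq (fun i => hS.1 i l) (hS.2.2 l)]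
  have := overlapMat_mul_splitMat_apply_self_ge hk hn l
  have h2 : 2 * ((k : ℝ) / (2 * n)) = k / n := by field_simp
  linarith

end OverlapMatrix

lemma l1_sub_comm {k : ℕ} (A B : Matrix (Fin k) (Fin k) ℝ) : l1 (A - B) = l1 (B - A) := by
  simp only [l1, Matrix.sub_apply, abs_sub_comm]

lemma exists_near_matShape_of_exists_near {c ε : ℝ} {a b n k : ℕ}
    {X : Matrix (Fin a) (Fin a) ℝ} {Y : Matrix (Fin b) (Fin b) ℝ}
    (hX : ∀ i j, 0 ≤ X i j) (hcX : gamma X ≤ c) (hn : 0 < n) (hk : 0 < k)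
    (h : ∀ W ∈ matShape X n, ∃ W' ∈ matShape Y n, l1 (W - W') ≤ ε) :
    ∀ P ∈ matShape X k, ∃ P' ∈ matShape Y k, l1 (P - P') ≤ ε + 4 * c * k / n := by
  rintro _ ⟨M, hM, rfl⟩
  set R := overlapMat k n
  set Q := splitMat k n
  have hR : R ∈ Kset k (Fin n) := overlapMat_mem_Kset hk
  have hQ : Q ∈ Kset n (Fin k) := splitMat_mem_Kset hk hn
  obtain ⟨_, ⟨N', hN', rfl⟩, hnear⟩ := h _ ⟨Q * M, mul_mem_Kset hk hQ hM, rfl⟩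
  refine ⟨_, ⟨R * N', mul_mem_Kset hn hR hN', rfl⟩, ?_⟩
  set P := M * X * Mᵀ
  have hPc : entrywiseL1 P ≤ c := calc
    entrywiseL1 P ≤ entrywiseL1 X :=
      entrywiseL1_conj_le (fun j => (sum_abs_col_of_mem_Kset hM j).le) X
    _ = gamma X := (gamma_eq_entrywiseL1 hX).symm
    _ ≤ c := hcX
  have hc : 0 ≤ c := (entrywiseL1_nonneg P).trans hPc
  have hS : R * Q ∈ Kset k (Fin k) := mul_mem_Kset hn hR hQ
  have hfactor : R * Q * P * (R * Q)ᵀ - R * N' * Y * (R * N')ᵀ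
      = R * (Q * M * X * (Q * M)ᵀ - N' * Y * N'ᵀ) * Rᵀ := by
    simp only [transpose_mul, Matrix.mul_sub, Matrix.sub_mul, Matrix.mul_assoc, P]
  rw [l1_eq_entrywiseL1]
  calc entrywiseL1 (P - R * N' * Y * (R * N')ᵀ)
      ≤ entrywiseL1 (P - R * Q * P * (R * Q)ᵀ)
        + entrywiseL1 (R * Q * P * (R * Q)ᵀ - R * N' * Y * (R * N')ᵀ) := by
        simpa only [sub_add_sub_cancel] using
          entrywiseL1_add_le (P - R * Q * P * (R * Q)ᵀ)
            (R * Q * P * (R * Q)ᵀ - R * N' * Y * (R * N')ᵀ)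
    _ ≤ 2 * ((k : ℝ) / n) * entrywiseL1 P + l1 (Q * M * X * (Q * M)ᵀ - N' * Y * N'ᵀ) := by
        gcongr
        · exact entrywiseL1_sub_conj_le
            (fun l => (sum_abs_col_of_mem_Kset hS l).le)
            (sum_abs_one_sub_overlapMat_mul_splitMat_le hk hn) P
        · rw [hfactor]
          exact entrywiseL1_conj_le (fun l => (sum_abs_col_of_mem_Kset hR l).le) _
    _ ≤ 2 * ((k : ℝ) / n) * c + ε := by gcongr
    _ ≤ ε + 4 * c * k / n := by
        rw [mul_div_assoc]
        nlinarith [mul_nonneg hc (by positivity : (0 : ℝ) ≤ k / n)]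

/-- If `γ(X), γ(Y) ≤ c` and the ℓ¹-Hausdorff distance between `C(X,n)` and
`C(Y,n)` is at most `ε`, then that between `C(X,k)` and `C(Y,k)` is at most `ε + 4ck/n`. -/
theorem stmt_15 (c ε : ℝ) (a b : ℕ)
    (X : Matrix (Fin a) (Fin a) ℝ) (Y : Matrix (Fin b) (Fin b) ℝ)
    (hX : ∀ i j, 0 ≤ X i j) (hY : ∀ i j, 0 ≤ Y i j)
    (hcX : gamma X ≤ c) (hcY : gamma Y ≤ c)
    (n k : ℕ) (hn : 0 < n) (hk : 0 < k)
    (h : hdistLE (matShape X n) (matShape Y n) ε) :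
    hdistLE (matShape X k) (matShape Y k) (ε + 4 * c * k / n) := by
  refine ⟨exists_near_matShape_of_exists_near hX hcX hn hk h.1, fun P' hP' => ?_⟩
  have h' : ∀ W ∈ matShape Y n, ∃ W' ∈ matShape X n, l1 (W - W') ≤ ε := fun W hW => by
    obtain ⟨W', hW', hle⟩ := h.2 W hW
    exact ⟨W', hW', l1_sub_comm W W' ▸ hle⟩
  obtain ⟨P, hP, hle⟩ := exists_near_matShape_of_exists_near hY hcY hn hk h' P' hP'
  exact ⟨P, hP, l1_sub_comm P' P ▸ hle⟩
end
end
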